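/- arXiv:2311.05731 — 5 statements merged into one kernel-verified Lean document; each statement's English description precedes it below -/
import Mathlib

section
/- Let s : ℕ → List ℕ be given by s(0) = [0,1] and s(n) = [0, n−1, n+1] for n ≥ 1, extended to words (lists) by concatenation of the images of the letters. Then for every n ≥ 1, the word sⁿ(0) (the n-fold iterate applied to the single letter 0) begins with the letter 0 and contains the letter n. -/
/-- The restriction to the integer letters of the substitution `ϱ_∞` on the one-point
compactification of `ℕ`: `0 ↦ 0 1` and `n ↦ 0 (n-1) (n+1)` for `n ≥ 1`. -/
def sInfty : ℕ → List ℕ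
  | 0 => [0, 1]
  | (n + 1) => [0, n, n + 2]

section SubstitutionIterates

variable {α : Type*}

theorem head?_flatMap_of_head? {β : Type*} {f : α → List β} {w : List α} {a : α} {b : β}
    (hw : w.head? = some a) (hf : (f a).head? = some b) : (w.flatMap f).head? = some b := by
  obtain ⟨t, rfl⟩ : ∃ t, w = a :: t := by
    cases w <;> simp_all
  simp [hf]

theorem head?_iterate_flatMap {σ : α → List α} {a : α} (h : (σ a).head? = some a) (m : ℕ) :
    ((fun w : List α => w.flatMap σ)^[m] [a]).head? = some a := by
  induction m with
  | zero => rfl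
  | succ m ih =>
    rw [Function.iterate_succ_apply']
    exact head?_flatMap_of_head? ih h

theorem iterate_mem_iterate_flatMap {σ : α → List α} {f : α → α} (h : ∀ a, f a ∈ σ a)
    (a : α) (m : ℕ) : f^[m] a ∈ (fun w : List α => w.flatMap σ)^[m] [a] := by
  induction m with
  | zero => exact List.mem_singleton_self a
  | succ m ih =>
    rw [Function.iterate_succ_apply', Function.iterate_succ_apply']
    exact List.mem_flatMap.2 ⟨_, ih, h _⟩

end SubstitutionIterates

theorem succ_mem_sInfty (n : ℕ) : n.succ ∈ sInfty n := by
  cases n <;> simp [sInfty]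

theorem sInfty_iterate_head_mem_general (n : ℕ) :
    ((fun w : List ℕ => w.flatMap sInfty)^[n] [0]).head? = some 0 ∧
      n ∈ (fun w : List ℕ => w.flatMap sInfty)^[n] [0] := by
  refine ⟨head?_iterate_flatMap rfl n, ?_⟩
  simpa [Nat.succ_iterate] using iterate_mem_iterate_flatMap succ_mem_sInfty 0 n

/-- **Combinatorial primitivity of `ϱ_∞`.**  For every `n ≥ 1`, the word `sⁿ(0)`, obtained by
iterating the substitution `s = ϱ_∞` (extended to words by concatenation) `n` times on the
single letter `0`, begins with the letter `0` and contains the letter `n`. -/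
theorem sInfty_iterate_head_mem (n : ℕ) (hn : 1 ≤ n) :
    ((fun w : List ℕ => w.flatMap sInfty)^[n] [0]).head? = some 0 ∧
      n ∈ (fun w : List ℕ => w.flatMap sInfty)^[n] [0] :=
  sInfty_iterate_head_mem_general n
end

section
/- Let m : ℕ → ℕ be bounded, let μ ∈ (0,1) satisfy Σ_{i=0}^∞ m_i μ^{i+1} = 1, and set λ = μ + 1/μ. Define L(n) = μⁿ + Σ_{j=1}^{n} Σ_{i=j}^{∞} m_i μ^{i+n+1−2j} for n ∈ ℕ. Then L(0) = 1, λ·L(0) = m₀·L(0) + L(1), and λ·L(n) = m_n·L(0) + L(n−1) + L(n+1) for every n ≥ 1. (That is, L is a natural length function for ϱ_m with inflation factor λ.) -/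
/-!
Write `T j = ∑ᵢ m_{j+i} μⁱ` for the tails of the defining series, so that `μ T₀ = 1` and
`T j = m_j + μ T_{j+1}`. Then `L n = μⁿ + ∑_{j=1}^{n} T_j μ^{n+1-j}`, and the correction term
`A n = ∑_{j=1}^{n} T_j μ^{n+1-j}` satisfies `A (n+1) = μ A n + μ T_{n+1}`. Feeding these two
recurrences into `L (n-1) + L (n+1)` leaves exactly `(μ + 1/μ) L n - m_n`.
-/

open Finset

section TailSum

variable {K : Type*} [Field K] [TopologicalSpace K] [IsTopologicalRing K]

noncomputable def tailSum (a : ℕ → K) (x : K) (j : ℕ) : K := ∑' i, a (j + i) * x ^ i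

lemma summable_tail {a : ℕ → K} {x : K} (hx : x ≠ 0) (h : Summable fun i => a i * x ^ i)
    (j : ℕ) : Summable fun i => a (j + i) * x ^ i := by
  have hshift := ((summable_nat_add_iff j).2 h).mul_left (x ^ j)⁻¹
  refine hshift.congr fun i => ?_
  rw [add_comm i j, pow_add]
  field_simp

lemma tailSum_eq_add [T2Space K] {a : ℕ → K} {x : K} {j : ℕ}
    (h : Summable fun i => a (j + i) * x ^ i) :
    tailSum a x j = a j + x * tailSum a x (j + 1) := by
  rw [tailSum, h.tsum_eq_zero_add, tailSum, ← tsum_mul_left]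
  simp only [add_zero, pow_zero, mul_one]
  congr 2 with i
  rw [show j + (i + 1) = j + 1 + i by omega, pow_succ]
  ring

end TailSum

section LengthFunction

variable {K : Type*} [Field K]

def lengthFun (T : ℕ → K) (x : K) (n : ℕ) : K :=
  x ^ n + ∑ j ∈ Icc 1 n, T j * x ^ (n + 1 - j)

lemma sum_Icc_succ_mul_pow (T : ℕ → K) (x : K) (n : ℕ) :
    ∑ j ∈ Icc 1 (n + 1), T j * x ^ (n + 1 + 1 - j) =
      x * ∑ j ∈ Icc 1 n, T j * x ^ (n + 1 - j) + x * T (n + 1) := by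
  rw [sum_Icc_succ_top (by omega), mul_sum, Nat.add_sub_cancel_left, pow_one, mul_comm x]
  congr 1
  refine sum_congr rfl fun j hj => ?_
  rw [show n + 1 + 1 - j = n + 1 - j + 1 by grind, pow_succ]
  ring

lemma lengthFun_succ (T : ℕ → K) (x : K) (n : ℕ) :
    lengthFun T x (n + 1) = x * lengthFun T x n + x * T (n + 1) := by
  rw [lengthFun, lengthFun, sum_Icc_succ_mul_pow, pow_succ]
  ring

lemma lengthFun_zero (T : ℕ → K) (x : K) : lengthFun T x 0 = 1 := by
  simp [lengthFun]

variable {a T : ℕ → K} {x : K}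

lemma lengthFun_inflation_zero (hT : T 0 = a 0 + x * T 1) (hT₀ : x * T 0 = 1) :
    (x + 1 / x) * lengthFun T x 0 = a 0 * lengthFun T x 0 + lengthFun T x 1 := by
  rw [lengthFun_succ, lengthFun_zero, ← eq_one_div_of_mul_eq_one_right hT₀, hT]
  ring

lemma lengthFun_inflation_succ (n : ℕ) (hT : T (n + 1) = a (n + 1) + x * T (n + 2))
    (hx : x ≠ 0) :
    (x + 1 / x) * lengthFun T x (n + 1) =
      a (n + 1) * lengthFun T x 0 + lengthFun T x n + lengthFun T x (n + 2) := by
  rw [lengthFun_succ T x (n + 1), lengthFun_succ T x n, lengthFun_zero, hT]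
  field_simp
  ring

end LengthFunction

theorem natural_length_function_rho_m_general (m : ℕ → ℕ)
    (μ : ℝ) (hμ : μ ∈ Set.Ioo (0 : ℝ) 1)
    (hsum : ∑' i : ℕ, (m i : ℝ) * μ ^ (i + 1) = 1)
    (lam : ℝ) (hlam : lam = μ + 1 / μ)
    (L : ℕ → ℝ)
    (hL : ∀ n : ℕ, L n =
      μ ^ n + ∑ j ∈ Finset.Icc 1 n, ∑' i : ℕ, (m (j + i) : ℝ) * μ ^ (i + (n + 1 - j))) :
    L 0 = 1 ∧ lam * L 0 = (m 0 : ℝ) * L 0 + L 1 ∧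
      ∀ n : ℕ, 1 ≤ n → lam * L n = (m n : ℝ) * L 0 + L (n - 1) + L (n + 1) := by
  have hμ₀ : μ ≠ 0 := hμ.1.ne'
  set T := tailSum (fun i => (m i : ℝ)) μ
  -- a non-summable series would have sum `0`, not `1`
  have hsummable : Summable fun i => (m i : ℝ) * μ ^ (i + 1) :=
    by_contra fun h => by simp [tsum_eq_zero_of_not_summable h] at hsum
  have hsummable' : Summable fun i => (m i : ℝ) * μ ^ i := by
    refine (summable_mul_right_iff hμ₀).1 (hsummable.congr fun i => ?_)
    ring
  have hT (j : ℕ) : T j = m j + μ * T (j + 1) :=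
    tailSum_eq_add (summable_tail (a := fun i => (m i : ℝ)) hμ₀ hsummable' j)
  have hT₀ : μ * T 0 = 1 := by
    simp only [T, tailSum, ← tsum_mul_left, zero_add, ← hsum]
    congr 1 with i
    ring
  have hLT : L = lengthFun T μ := by
    ext n
    refine (hL n).trans (congrArg _ (sum_congr rfl fun j _ => ?_))
    simp only [T, tailSum, ← tsum_mul_right, pow_add, mul_assoc]
  subst hlam hLT
  refine ⟨lengthFun_zero T μ, lengthFun_inflation_zero (a := fun i => (m i : ℝ)) (hT 0) hT₀, ?_⟩
  rintro (_ | n) hn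
  · omega
  · exact lengthFun_inflation_succ (a := fun i => (m i : ℝ)) n (hT (n + 1)) hμ₀

/-- **The natural length function of `ϱ_m`.**
Let `m : ℕ → ℕ` be bounded, let `μ ∈ (0,1)` satisfy `Σ_{i=0}^∞ m_i μ^{i+1} = 1`, and set
`λ = μ + 1/μ`.  Define `L(n) = μⁿ + Σ_{j=1}^{n} Σ_{i=j}^{∞} m_i μ^{i+n+1-2j}` (the inner sum is
written below with the reindexing `i = j + i'`, so the exponent `i+n+1-2j` becomes
`i' + (n+1-j)`).  Then `L(0) = 1`, `λ·L(0) = m₀·L(0) + L(1)`, and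
`λ·L(n) = m_n·L(0) + L(n-1) + L(n+1)` for every `n ≥ 1`; that is, `L` is a natural length
function for `ϱ_m` (which maps `0 ↦ 0^{m₀} 1` and `n ↦ 0^{m_n} (n-1)(n+1)`) with inflation
factor `λ`. -/
theorem natural_length_function_rho_m (m : ℕ → ℕ) (C : ℕ) (hm : ∀ i, m i ≤ C)
    (μ : ℝ) (hμ : μ ∈ Set.Ioo (0 : ℝ) 1)
    (hsum : ∑' i : ℕ, (m i : ℝ) * μ ^ (i + 1) = 1)
    (lam : ℝ) (hlam : lam = μ + 1 / μ)
    (L : ℕ → ℝ)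
    (hL : ∀ n : ℕ, L n =
      μ ^ n + ∑ j ∈ Finset.Icc 1 n, ∑' i : ℕ, (m (j + i) : ℝ) * μ ^ (i + (n + 1 - j))) :
    L 0 = 1 ∧ lam * L 0 = (m 0 : ℝ) * L 0 + L 1 ∧
      ∀ n : ℕ, 1 ≤ n → lam * L n = (m n : ℝ) * L 0 + L (n - 1) + L (n + 1) :=
  natural_length_function_rho_m_general m μ hμ hsum lam hlam L hL
end

section
/- The unique μ ∈ (0,1) satisfying Σ_{i=0}^∞ μ^{i+1} = 1 is μ = 1/2, so the inflation factor of the substitution ϱ_∞ is λ = μ + 1/μ = 5/2. Moreover 5/2 is not an algebraic integer (it is not integral over ℤ); in particular, λ = 5/2 cannot be the inflation factor of any primitive substitution on a finite alphabet. -/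
/-!
The series sums to `μ / (1 - μ)`, which equals `1` exactly at `μ = 1/2`. The rational `5/2` is
not an integer, so it is not integral over `ℤ` (`ℤ` is integrally closed); but an eigenvalue of
an integer matrix is a root of its monic characteristic polynomial, hence integral over `ℤ`.
-/

open Matrix Polynomial

theorem tsum_pow_succ_of_lt_one {μ : ℝ} (h₀ : 0 ≤ μ) (h₁ : μ < 1) :
    ∑' i : ℕ, μ ^ (i + 1) = μ / (1 - μ) := by
  simp_rw [pow_succ', tsum_mul_left, tsum_geometric_of_lt_one h₀ h₁, div_eq_mul_inv]

theorem tsum_pow_succ_eq_one_iff {μ : ℝ} (h₀ : 0 ≤ μ) (h₁ : μ < 1) :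
    ∑' i : ℕ, μ ^ (i + 1) = 1 ↔ μ = 1 / 2 := by
  rw [tsum_pow_succ_of_lt_one h₀ h₁, div_eq_one_iff_eq (sub_ne_zero.mpr h₁.ne')]
  constructor <;> intro h <;> linarith

theorem not_isIntegral_int_five_halves : ¬ IsIntegral ℤ (5 / 2 : ℝ) := by
  intro h
  obtain ⟨k, hk⟩ := (IsIntegral.exists_int_iff_exists_rat h).mp ⟨5 / 2, by norm_num⟩
  have : (2 * k : ℝ) = 5 := by rw [← hk]; norm_num
  have : 2 * k = 5 := by exact_mod_cast this
  omega

theorem Matrix.isIntegral_of_mulVec_eq_smul {R S n : Type*} [CommRing R] [CommRing S]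
    [IsDomain S] [Algebra R S] [Fintype n] [DecidableEq n] (A : Matrix n n R) {r : S}
    {v : n → S} (hv : v ≠ 0) (h : A.map (algebraMap R S) *ᵥ v = r • v) : IsIntegral R r := by
  refine ⟨A.charpoly, A.charpoly_monic, ?_⟩
  rw [eval₂_eq_eval_map, ← charpoly_map, eval_charpoly, ← exists_mulVec_eq_zero_iff]
  refine ⟨v, hv, ?_⟩
  ext i
  simp [sub_mulVec, h]

/-- **The inflation factor of `ϱ_∞` is `5/2`, which is not an algebraic integer.**
The unique `μ ∈ (0,1)` with `Σ_{i=0}^∞ μ^{i+1} = 1` is `μ = 1/2`, so the inflation factor of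
`ϱ_∞` (the case `m_i ≡ 1`) is `λ = μ + 1/μ = 5/2`.  Moreover `5/2` is not integral over `ℤ`;
in particular no non-negative integer matrix (such as the substitution matrix of a primitive
substitution on a finite alphabet) can have `5/2` as an eigenvalue, so `λ = 5/2` is not the
inflation factor of any primitive substitution on a finite alphabet. -/
theorem inflation_factor_rho_infty :
    (∀ μ : ℝ, μ ∈ Set.Ioo (0 : ℝ) 1 → ((∑' i : ℕ, μ ^ (i + 1) = 1) ↔ μ = 1 / 2)) ∧
    (1 / 2 : ℝ) + 1 / (1 / 2 : ℝ) = 5 / 2 ∧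
    ¬ IsIntegral ℤ (5 / 2 : ℝ) ∧
    ∀ (n : ℕ) (M : Matrix (Fin n) (Fin n) ℕ) (v : Fin n → ℝ),
      (Matrix.of fun i j => (M i j : ℝ)).mulVec v = (5 / 2 : ℝ) • v → v = 0 := by
  refine ⟨fun μ hμ => tsum_pow_succ_eq_one_iff hμ.1.le hμ.2, by norm_num,
    not_isIntegral_int_five_halves, fun n M v hv => ?_⟩
  by_contra hv₀
  refine not_isIntegral_int_five_halves
    ((M.map ((↑) : ℕ → ℤ)).isIntegral_of_mulVec_eq_smul hv₀ ?_)
  convert hv using 2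
  ext i j
  simp
end

section
/- Let m : ℕ → ℕ be bounded, let μ ∈ (0,1) satisfy Σ_{i=0}^∞ m_i μ^{i+1} = 1, and set λ = μ + 1/μ. Define ν(n) = (1−μ)·μⁿ for n ∈ ℕ. Then Σ_{n=0}^∞ ν(n) = 1, λ·ν(n) = ν(n−1) + ν(n+1) for every n ≥ 1, and λ·ν(0) = Σ_{a=0}^∞ m_a·ν(a) + ν(1). (That is, ν is the normalized vector of relative letter frequencies for ϱ_m: letter n ≥ 1 occurs once in ϱ_m(n−1) and once in ϱ_m(n+1), while letter 0 occurs m_a times in ϱ_m(a) and additionally once in ϱ_m(1).) -/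
/-!
The letters `n ≥ 1` satisfy `λ ν(n) = ν(n-1) + ν(n+1)`, which for the geometric sequence
`ν(n) = c μⁿ` is just `(μ + μ⁻¹) μⁿ⁺¹ = μⁿ + μⁿ⁺²`, and the normalisation `c = 1 - μ` comes
from the geometric series. For the letter `0`, `Σ m_a ν(a) = (c / μ) Σ m_a μ^{a+1} = c / μ`
by the defining equation of `μ`, and `λ c = c / μ + c μ`.
-/

theorem tsum_one_sub_mul_pow {K : Type*} [NormedField K] [CompleteSpace K] {μ : K}
    (hμ : ‖μ‖ < 1) : ∑' n : ℕ, (1 - μ) * μ ^ n = 1 := by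
  have hne : 1 - μ ≠ 0 := sub_ne_zero.2 fun h => by simp [← h] at hμ
  rw [tsum_mul_left, tsum_geometric_of_norm_lt_one hμ, mul_inv_cancel₀ hne]

theorem add_one_div_mul_mul_pow_succ {K : Type*} [Field K] {μ : K} (hμ : μ ≠ 0) (c : K)
    (n : ℕ) : (μ + 1 / μ) * (c * μ ^ (n + 1)) = c * μ ^ n + c * μ ^ (n + 2) := by
  field_simp
  ring

theorem tsum_mul_mul_pow_of_tsum_mul_pow_succ_eq_one {K : Type*} [Field K] [TopologicalSpace K]
    [IsTopologicalSemiring K] [T2Space K] {a : ℕ → K} {μ : K} (hμ : μ ≠ 0)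
    (h : ∑' i : ℕ, a i * μ ^ (i + 1) = 1) (c : K) :
    ∑' i : ℕ, a i * (c * μ ^ i) = c / μ := by
  calc ∑' i : ℕ, a i * (c * μ ^ i) = ∑' i : ℕ, c / μ * (a i * μ ^ (i + 1)) := by
        congr 1 with i
        field_simp
        ring
    _ = c / μ := by rw [tsum_mul_left, h, mul_one]

theorem letter_frequencies_rho_m_general (m : ℕ → ℕ)
    (μ : ℝ) (hμ : μ ∈ Set.Ioo (0 : ℝ) 1)
    (hsum : ∑' i : ℕ, (m i : ℝ) * μ ^ (i + 1) = 1)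
    (lam : ℝ) (hlam : lam = μ + 1 / μ)
    (ν : ℕ → ℝ) (hν : ∀ n : ℕ, ν n = (1 - μ) * μ ^ n) :
    (∑' n : ℕ, ν n = 1) ∧
    (∀ n : ℕ, 1 ≤ n → lam * ν n = ν (n - 1) + ν (n + 1)) ∧
    lam * ν 0 = (∑' a : ℕ, (m a : ℝ) * ν a) + ν 1 := by
  obtain ⟨hμ0, hμ1⟩ := hμ
  obtain rfl : ν = fun n => (1 - μ) * μ ^ n := funext hν
  subst hlam
  refine ⟨tsum_one_sub_mul_pow (by rwa [Real.norm_of_nonneg hμ0.le]), ?_, ?_⟩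
  · intro n hn
    obtain ⟨k, rfl⟩ := Nat.exists_eq_add_of_le' hn
    exact add_one_div_mul_mul_pow_succ hμ0.ne' (1 - μ) k
  · rw [tsum_mul_mul_pow_of_tsum_mul_pow_succ_eq_one hμ0.ne' hsum]
    field_simp
    ring

/-- **The relative letter frequencies of `ϱ_m`.**
Let `m : ℕ → ℕ` be bounded, let `μ ∈ (0,1)` satisfy `Σ_{i=0}^∞ m_i μ^{i+1} = 1`, and set
`λ = μ + 1/μ`.  Define `ν(n) = (1-μ)·μⁿ`.  Then `Σ_{n=0}^∞ ν(n) = 1`,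
`λ·ν(n) = ν(n-1) + ν(n+1)` for every `n ≥ 1`, and `λ·ν(0) = Σ_{a=0}^∞ m_a·ν(a) + ν(1)`;
that is, `ν` is the normalized vector of relative letter frequencies of the substitution
`ϱ_m : 0 ↦ 0^{m₀} 1, n ↦ 0^{m_n} (n-1)(n+1)`. -/
theorem letter_frequencies_rho_m (m : ℕ → ℕ) (C : ℕ) (hm : ∀ i, m i ≤ C)
    (μ : ℝ) (hμ : μ ∈ Set.Ioo (0 : ℝ) 1)
    (hsum : ∑' i : ℕ, (m i : ℝ) * μ ^ (i + 1) = 1)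
    (lam : ℝ) (hlam : lam = μ + 1 / μ)
    (ν : ℕ → ℝ) (hν : ∀ n : ℕ, ν n = (1 - μ) * μ ^ n) :
    (∑' n : ℕ, ν n = 1) ∧
    (∀ n : ℕ, 1 ≤ n → lam * ν n = ν (n - 1) + ν (n + 1)) ∧
    lam * ν 0 = (∑' a : ℕ, (m a : ℝ) * ν a) + ν 1 :=
  letter_frequencies_rho_m_general m μ hμ hsum lam hlam ν hν
end

section
/- The Thue–Morse sequence t : ℕ → Bool is cube-free: there exist no i ≥ 0 and p ≥ 1 such that t(i+j) = t(i+j+p) for all 0 ≤ j < 2p. Equivalently, no nonempty finite word v has vvv occurring as a factor of t. -/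
/-!
Halving: `t (2n) = t n` and `t (2n+1) = !t n`. A cube of even period `2q` therefore projects onto
a cube of period `q` at half the position, so a cube of minimal period has odd period `p`. Period
`1` means three equal consecutive letters, impossible since each block `t (2n), t (2n+1)` is
`01` or `10`. For `p = 2q+1 ≥ 3`, comparing `t (2n), t (2n+1)` with the letters `p` further on,
which straddle the blocks `n+q, n+q+1`, gives `t (n+q) = t (n+q+1)` for two consecutive values
of `n` inside the cube: again three equal consecutive letters.
-/

/-- The Thue–Morse sequence: `thueMorseBool n = true` iff the number of `1`s in the binary
expansion of `n` is odd. -/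
def thueMorseBool (n : ℕ) : Bool := decide (Odd ((Nat.digits 2 n).count 1))

lemma thueMorseBool_two_mul (n : ℕ) : thueMorseBool (2 * n) = thueMorseBool n := by
  rcases Nat.eq_zero_or_pos n with rfl | hn
  · rfl
  · unfold thueMorseBool
    rw [Nat.digits_def' one_lt_two (by omega), Nat.mul_mod_right,
      Nat.mul_div_cancel_left n two_pos, List.count_cons]
    simp

lemma thueMorseBool_two_mul_add_one (n : ℕ) :
    thueMorseBool (2 * n + 1) = !thueMorseBool n := by
  unfold thueMorseBool
  rw [Nat.digits_def' one_lt_two (by omega), Nat.mul_add_mod_self_left,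
    Nat.mul_add_div two_pos, List.count_cons, Bool.eq_iff_iff]
  simp [Nat.odd_add_one]

lemma thueMorseBool_two_mul_ne (n : ℕ) :
    thueMorseBool (2 * n) ≠ thueMorseBool (2 * n + 1) := by
  rw [thueMorseBool_two_mul, thueMorseBool_two_mul_add_one]
  cases thueMorseBool n <;> decide

lemma thueMorseBool_not_three_eq (k : ℕ) :
    ¬ (thueMorseBool k = thueMorseBool (k + 1) ∧ thueMorseBool (k + 1) = thueMorseBool (k + 2)) := by
  rintro ⟨h₁, h₂⟩
  obtain ⟨m, rfl | rfl⟩ := Nat.even_or_odd' k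
  · exact thueMorseBool_two_mul_ne m h₁
  · exact thueMorseBool_two_mul_ne (m + 1) (by convert h₂ using 2 <;> ring)

/-- The factor `f i, …, f (i + 3p - 1)` of `f` is a cube `xxx` with `|x| = p`. -/
def HasCubeAt {α : Type*} (f : ℕ → α) (i p : ℕ) : Prop :=
  ∀ j < 2 * p, f (i + j) = f (i + j + p)

lemma HasCubeAt.apply_add_eq {α : Type*} {f : ℕ → α} {i p : ℕ} (h : HasCubeAt f i p)
    {m : ℕ} (him : i ≤ m) (hm : m < i + 2 * p) : f (m + p) = f m := by
  obtain ⟨j, rfl⟩ := Nat.exists_eq_add_of_le him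
  exact (h j (by omega)).symm

lemma HasCubeAt.of_append_append_eq_ofFn {α : Type*} {f : ℕ → α} {v : List α} {i : ℕ}
    (h : v ++ v ++ v = List.ofFn fun j : Fin (3 * v.length) => f (i + j)) :
    HasCubeAt f i v.length := by
  intro j hj
  have hw : ∀ k < 3 * v.length, (v ++ v ++ v)[k]? = some (f (i + k)) := fun k hk => by
    simp [h, hk]
  have hshift : (v ++ v ++ v)[v.length + j]? = (v ++ v ++ v)[j]? := by
    rw [← List.getElem?_drop, List.append_assoc, List.drop_left, ← List.append_assoc,
      List.getElem?_append_left (l₁ := v ++ v) (by simpa [two_mul] using hj)]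
  rw [hw j (by omega), hw (v.length + j) (by omega), Option.some_inj] at hshift
  rw [← hshift, add_comm v.length j, add_assoc]

lemma HasCubeAt.thueMorseBool_half {i q : ℕ} (h : HasCubeAt thueMorseBool i (2 * q)) :
    HasCubeAt thueMorseBool ((i + 1) / 2) q := by
  intro j hj
  have := h.apply_add_eq (m := 2 * ((i + 1) / 2 + j)) (by omega) (by omega)
  rwa [← mul_add, thueMorseBool_two_mul, thueMorseBool_two_mul, eq_comm] at this

lemma HasCubeAt.thueMorseBool_eq_succ {i q : ℕ} (h : HasCubeAt thueMorseBool i (2 * q + 1))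
    {n : ℕ} (hin : i ≤ 2 * n) (hn : 2 * n + 1 < i + 2 * (2 * q + 1)) :
    thueMorseBool (n + q) = thueMorseBool (n + q + 1) := by
  have heven := h.apply_add_eq hin (by omega)
  have hodd := h.apply_add_eq (m := 2 * n + 1) (by omega) hn
  rw [show 2 * n + (2 * q + 1) = 2 * (n + q) + 1 by ring, thueMorseBool_two_mul_add_one,
    thueMorseBool_two_mul] at heven
  rw [show 2 * n + 1 + (2 * q + 1) = 2 * (n + q + 1) by ring, thueMorseBool_two_mul,
    thueMorseBool_two_mul_add_one, ← heven, Bool.not_not] at hodd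
  exact hodd.symm

lemma not_hasCubeAt_thueMorseBool_odd (i q : ℕ) : ¬ HasCubeAt thueMorseBool i (2 * q + 1) := by
  intro h
  rcases Nat.eq_zero_or_pos q with rfl | hq
  · exact thueMorseBool_not_three_eq i ⟨h 0 (by omega), h 1 (by omega)⟩
  · have h₁ := h.thueMorseBool_eq_succ (n := (i + 1) / 2) (by omega) (by omega)
    have h₂ := h.thueMorseBool_eq_succ (n := (i + 1) / 2 + 1) (by omega) (by omega)
    exact thueMorseBool_not_three_eq ((i + 1) / 2 + q)
      ⟨h₁, by convert h₂ using 2 <;> ring⟩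

theorem not_hasCubeAt_thueMorseBool {p : ℕ} (hp : 0 < p) (i : ℕ) :
    ¬ HasCubeAt thueMorseBool i p := by
  induction p using Nat.strong_induction_on generalizing i with
  | _ p ih =>
    obtain ⟨q, rfl | rfl⟩ := Nat.even_or_odd' p
    · exact fun h => ih q (by omega) (by omega) _ h.thueMorseBool_half
    · exact not_hasCubeAt_thueMorseBool_odd i q

/-- **The Thue–Morse sequence is cube-free.**
There are no `i ≥ 0` and `p ≥ 1` with `t(i+j) = t(i+j+p)` for all `0 ≤ j < 2p`; equivalently,
no nonempty finite word `v` has `vvv` occurring as a factor of the Thue–Morse sequence. -/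
theorem thueMorse_cubefree :
    (¬ ∃ (i p : ℕ), 1 ≤ p ∧ ∀ j < 2 * p, thueMorseBool (i + j) = thueMorseBool (i + j + p)) ∧
    (¬ ∃ (v : List Bool) (i : ℕ), v ≠ [] ∧
      v ++ v ++ v = List.ofFn fun j : Fin (3 * v.length) => thueMorseBool (i + j)) := by
  constructor
  · rintro ⟨i, p, hp, h⟩
    exact not_hasCubeAt_thueMorseBool hp i h
  · rintro ⟨v, i, hv, h⟩
    exact not_hasCubeAt_thueMorseBool (List.length_pos_iff.mpr hv) i
      (HasCubeAt.of_append_append_eq_ofFn h)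
end
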